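/- arXiv:2412.20401 — 3 statements merged into one kernel-verified Lean document; each statement's English description precedes it below -/
import Mathlib

section
/- For any ω-poset P and any element p ∈ P, the set {S ∈ SP : S ⊆ p^∧} (all minimal selectors every element of which has a common lower bound with p) is a closed subset of the spectrum SP. Moreover the closure of p_S = {S ∈ SP : p ∈ S} is always contained in this set, with equality when P is prime. -/
namespace OP

section OmegaPoset

variable (P : Type*) [PartialOrder P]

/-- The n-th cone of the poset: `cone 0` is the set of maximal elements. -/
def cone : ℕ → Set P
  | 0 => {p | ∀ q, ¬ p < q}
  | n + 1 => {p | ∀ q, p < q → q ∈ cone n}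

/-- The n-th level: atoms (minimal elements) of the n-th cone. -/
def level (n : ℕ) : Set P := {p | p ∈ cone P n ∧ ∀ q, q < p → q ∉ cone P n}

/-- An ω-poset: all levels finite and every element in some cone. -/
def IsOmegaPoset : Prop := (∀ n, (level P n).Finite) ∧ ∀ p : P, ∃ n, p ∈ cone P n

variable {P}

/-- `refines A C` : every element of `A` lies below some element of `C` (`A ≤ C`). -/
def refines (A C : Set P) : Prop := ∀ a ∈ A, ∃ c ∈ C, a ≤ c

/-- A cap is a subset refined by some level. -/
def IsCap (C : Set P) : Prop := ∃ n, refines (level P n) C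

/-- A selector meets every cap. -/
def IsSelector (S : Set P) : Prop := ∀ C : Set P, IsCap C → (S ∩ C).Nonempty

/-- `wedge p q` : `p` and `q` have a common lower bound. -/
def wedge (p q : P) : Prop := ∃ r, r ≤ p ∧ r ≤ q

def wedgeSet (p : P) : Set P := {q | wedge p q}

/-- The adjacency relation `p ⌅ q`. -/
def barwedge (p q : P) : Prop := ∀ C : Set P, IsCap C → ∃ c ∈ C, wedge p c ∧ wedge c q

/-- `p ⊲_C q`. -/
def starBelowOn (C : Set P) (p q : P) : Prop := ∀ c ∈ C, wedge p c → c ≤ q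

/-- The star-below relation `p ⊲ q`. -/
def starBelow (p q : P) : Prop := ∃ n, starBelowOn (level P n) p q

/-- A clique: pairwise adjacent set. -/
def IsClique (X : Set P) : Prop := ∀ p ∈ X, ∀ q ∈ X, barwedge p q

/-- Unbounded subset: meets `C^≥` for every cap `C`. -/
def IsUnbounded (X : Set P) : Prop := ∀ C : Set P, IsCap C → ∃ u ∈ X, ∃ c ∈ C, u ≤ c

variable (P)

/-- Regularity: every level is eventually star-refined by a later level. -/
def IsRegular : Prop :=
  ∀ m, ∃ n, m < n ∧ ∀ p ∈ level P n, ∃ q ∈ level P m, starBelow p q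

/-- The spectrum: minimal selectors. -/
def Spec : Set (Set P) := {S | IsSelector S ∧ ∀ T ⊆ S, IsSelector T → T = S}

def SpecT : Type _ := {S : Set P // S ∈ Spec P}

instance : TopologicalSpace (SpecT P) :=
  TopologicalSpace.generateFrom {U | ∃ p : P, U = {S : SpecT P | p ∈ S.1}}

/-- The clique-spectrum: unbounded maximal cliques. -/
def CliqueSpec : Set (Set P) :=
  {X | IsUnbounded X ∧ IsClique X ∧ ∀ Y : Set P, IsClique Y → X ⊆ Y → Y = X}

def CliqueSpecT : Type _ := {X : Set P // X ∈ CliqueSpec P}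

instance : TopologicalSpace (CliqueSpecT P) :=
  TopologicalSpace.generateFrom {U | ∃ p : P, U = {X : CliqueSpecT P | p ∉ X.1}}

variable {P}

/-- The basic open set `p_S`. -/
def pSOpen (p : P) : Set (SpecT P) := {S | p ∈ S.1}

/-- The closed set `p̄_S = {S : S ⊆ p^∧}`. -/
def pSBar (p : P) : Set (SpecT P) := {S | S.1 ⊆ wedgeSet p}

/-- Prime ω-poset: every basic open set is nonempty. -/
def IsPrimePoset (P : Type*) [PartialOrder P] : Prop := ∀ p : P, (pSOpen p).Nonempty

end OmegaPoset

end OP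

/-!
A minimal selector `S` is an up-set which is downward directed: for `s ∈ S`, minimality yields a
cap `C` with `S ∩ C ⊆ {s}`; replacing `s` in `C` by any `t ≥ s` still gives a cap, so `t ∈ S`; and
for `s, u ∈ S`, an element of `S` on a level refining both pinning caps must lie below `s` and `u`.
Directedness gives `p_S ⊆ p̄_S`, and `p̄_S` is closed as the complement of the union of the `q_S`
with `q` having no lower bound in common with `p`. Conversely, if `S ⊆ p^∧` and `F ⊆ S` is finite, a common lower bound
`w ∈ S` of `F` meets `p` in some `r`, and by primeness some `T ∈ SP` contains `r`, hence `p` and `F`: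
so every basic neighbourhood of `S` meets `p_S`.
-/

namespace OP

variable {P : Type*} [PartialOrder P]

section Levels

theorem cone_subset_cone_succ : ∀ n, cone P n ⊆ cone P (n + 1)
  | 0 => fun _ hp q hq => absurd hq (hp q)
  | n + 1 => fun _ hp q hq => cone_subset_cone_succ n (hp q hq)

theorem refines_refl (A : Set P) : refines A A := fun a ha => ⟨a, ha, le_rfl⟩

theorem refines.trans {A B C : Set P} (hAB : refines A B) (hBC : refines B C) :
    refines A C := by
  intro a ha
  obtain ⟨b, hb, hab⟩ := hAB a ha
  obtain ⟨c, hc, hbc⟩ := hBC b hb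
  exact ⟨c, hc, hab.trans hbc⟩

theorem level_succ_refines_level (n : ℕ) : refines (level P (n + 1)) (level P n) := by
  intro a ha
  by_cases h : a ∈ cone P n
  · exact ⟨a, ⟨h, fun q hqa hq => ha.2 q hqa (cone_subset_cone_succ n hq)⟩, le_rfl⟩
  cases n with
  | zero =>
    obtain ⟨q, haq⟩ : ∃ q, a < q := by simpa [cone] using h
    exact ⟨q, ⟨ha.1 q haq, fun r hrq hr => hr q hrq⟩, haq.le⟩
  | succ m =>
    obtain ⟨q, haq, hq⟩ : ∃ q, a < q ∧ q ∉ cone P m := by simpa [cone] using h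
    exact ⟨q, ⟨ha.1 q haq, fun r hrq hr => hq (hr q hrq)⟩, haq.le⟩

theorem level_refines_level_of_le {m n : ℕ} (h : m ≤ n) : refines (level P n) (level P m) := by
  induction n, h using Nat.le_induction with
  | base => exact refines_refl _
  | succ n _ ih => exact (level_succ_refines_level n).trans ih

theorem isCap_level (n : ℕ) : IsCap (level P n) := ⟨n, refines_refl _⟩

theorem IsCap.exists_level_refines {C D : Set P} (hC : IsCap C) (hD : IsCap D) :
    ∃ n, refines (level P n) C ∧ refines (level P n) D := by
  obtain ⟨k, hk⟩ := hC
  obtain ⟨l, hl⟩ := hD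
  exact ⟨max k l, (level_refines_level_of_le (le_max_left k l)).trans hk,
    (level_refines_level_of_le (le_max_right k l)).trans hl⟩

end Levels

section Spectrum

variable {S : Set P}

theorem exists_isCap_inter_subset_singleton (hS : S ∈ Spec P) {s : P} (hs : s ∈ S) :
    ∃ C, IsCap C ∧ S ∩ C ⊆ {s} := by
  have hsel : ¬ IsSelector (S \ {s}) := fun h => by
    have hs' : s ∈ S \ {s} := by rw [hS.2 _ Set.sdiff_subset h]; exact hs
    exact hs'.2 rfl
  simp only [IsSelector, not_forall] at hsel
  obtain ⟨C, hC, hempty⟩ := hsel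
  exact ⟨C, hC, fun x hx => by_contra fun hxs => hempty ⟨x, ⟨hx.1, hxs⟩, hx.2⟩⟩

theorem mem_of_mem_spec_of_le (hS : S ∈ Spec P) {s t : P} (hs : s ∈ S) (hst : s ≤ t) :
    t ∈ S := by
  obtain ⟨C, ⟨n, hn⟩, hpin⟩ := exists_isCap_inter_subset_singleton hS hs
  have hcap : IsCap (insert t (C \ {s})) := by
    refine ⟨n, fun a ha => ?_⟩
    obtain ⟨c, hc, hac⟩ := hn a ha
    by_cases hcs : c = s
    · exact ⟨t, Set.mem_insert t _, hac.trans (hcs ▸ hst)⟩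
    · exact ⟨c, Set.mem_insert_of_mem t ⟨hc, hcs⟩, hac⟩
  obtain ⟨x, hxS, rfl | ⟨hxC, hxs⟩⟩ := hS.1 _ hcap
  · exact hxS
  · exact absurd (hpin ⟨hxS, hxC⟩) hxs

theorem exists_le_le_of_mem_spec (hS : S ∈ Spec P) {s u : P} (hs : s ∈ S) (hu : u ∈ S) :
    ∃ w ∈ S, w ≤ s ∧ w ≤ u := by
  obtain ⟨C, hC, hpinC⟩ := exists_isCap_inter_subset_singleton hS hs
  obtain ⟨D, hD, hpinD⟩ := exists_isCap_inter_subset_singleton hS hu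
  obtain ⟨n, hnC, hnD⟩ := hC.exists_level_refines hD
  obtain ⟨w, hwS, hwn⟩ := hS.1 _ (isCap_level n)
  obtain ⟨c, hc, hwc⟩ := hnC w hwn
  obtain ⟨d, hd, hwd⟩ := hnD w hwn
  have hcs : c = s := hpinC ⟨mem_of_mem_spec_of_le hS hwS hwc, hc⟩
  have hdu : d = u := hpinD ⟨mem_of_mem_spec_of_le hS hwS hwd, hd⟩
  exact ⟨w, hwS, hcs ▸ hwc, hdu ▸ hwd⟩

theorem nonempty_of_mem_spec (hS : S ∈ Spec P) : S.Nonempty := by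
  obtain ⟨x, hx, -⟩ := hS.1 Set.univ ⟨0, fun a _ => ⟨a, trivial, le_rfl⟩⟩
  exact ⟨x, hx⟩

theorem exists_le_of_finset_subset_spec (hS : S ∈ Spec P) (F : Finset P) (hF : ↑F ⊆ S) :
    ∃ w ∈ S, ∀ q ∈ F, w ≤ q := by
  classical
  induction F using Finset.induction_on with
  | empty =>
    obtain ⟨w, hw⟩ := nonempty_of_mem_spec hS
    exact ⟨w, hw, by simp⟩
  | insert a G _ ih =>
    rw [Finset.coe_insert, Set.insert_subset_iff] at hF
    obtain ⟨w, hwS, hw⟩ := ih hF.2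
    obtain ⟨v, hvS, hva, hvw⟩ := exists_le_le_of_mem_spec hS hF.1 hwS
    refine ⟨v, hvS, fun q hq => ?_⟩
    rcases Finset.mem_insert.mp hq with rfl | hq
    · exact hva
    · exact hvw.trans (hw q hq)

end Spectrum

section Topology

theorem isOpen_pSOpen (q : P) : IsOpen (pSOpen q) :=
  TopologicalSpace.isOpen_generateFrom_of_mem ⟨q, rfl⟩

theorem exists_finset_of_isOpen {U : Set (SpecT P)} (hU : IsOpen U) {S : SpecT P} (hSU : S ∈ U) :
    ∃ F : Finset P, ↑F ⊆ S.1 ∧ ∀ T : SpecT P, ↑F ⊆ T.1 → T ∈ U := by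
  classical
  induction hU with
  | basic V hV =>
    obtain ⟨q, rfl⟩ := hV
    exact ⟨{q}, by simpa using hSU, fun T hT => hT (Finset.mem_singleton_self q)⟩
  | univ => exact ⟨∅, by simp, fun _ _ => trivial⟩
  | inter V W _ _ ihV ihW =>
    obtain ⟨F, hFS, hFV⟩ := ihV hSU.1
    obtain ⟨G, hGS, hGW⟩ := ihW hSU.2
    refine ⟨F ∪ G, by simpa using And.intro hFS hGS, fun T hT => ?_⟩
    rw [Finset.coe_union, Set.union_subset_iff] at hT
    exact ⟨hFV T hT.1, hGW T hT.2⟩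
  | sUnion K _ ih =>
    obtain ⟨V, hVK, hSV⟩ := hSU
    obtain ⟨F, hFS, hFV⟩ := ih V hVK hSV
    exact ⟨F, hFS, fun T hT => ⟨V, hVK, hFV T hT⟩⟩

theorem compl_pSBar (p : P) : (pSBar p)ᶜ = ⋃ q ∈ {q | ¬ wedge p q}, pSOpen q := by
  ext S
  simp [pSBar, pSOpen, wedgeSet, Set.subset_def, and_comm]

theorem isClosed_pSBar (p : P) : IsClosed (pSBar p) := by
  rw [← isOpen_compl_iff, compl_pSBar]
  exact isOpen_biUnion fun q _ => isOpen_pSOpen q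

theorem pSOpen_subset_pSBar (p : P) : pSOpen p ⊆ pSBar p := fun S hp _ hq =>
  let ⟨w, _, hwp, hwq⟩ := exists_le_le_of_mem_spec S.2 hp hq
  ⟨w, hwp, hwq⟩

theorem pSBar_subset_closure_pSOpen (hP : IsPrimePoset P) (p : P) :
    pSBar p ⊆ closure (pSOpen p) := by
  intro S hS
  rw [mem_closure_iff]
  intro U hU hSU
  obtain ⟨F, hFS, hFU⟩ := exists_finset_of_isOpen hU hSU
  obtain ⟨w, hwS, hwF⟩ := exists_le_of_finset_subset_spec S.2 F hFS
  obtain ⟨r, hrp, hrw⟩ := hS hwS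
  obtain ⟨T, hrT⟩ := hP r
  exact ⟨T, hFU T fun q hq => mem_of_mem_spec_of_le T.2 hrT (hrw.trans (hwF q hq)),
    mem_of_mem_spec_of_le T.2 hrT hrp⟩

end Topology

end OP

open OP in
theorem stmt0_general {P : Type*} [PartialOrder P] (p : P) :
    IsClosed (pSBar p) ∧ closure (pSOpen p) ⊆ pSBar p ∧
      (IsPrimePoset P → closure (pSOpen p) = pSBar p) := by
  have hcl : closure (pSOpen p) ⊆ pSBar p :=
    closure_minimal (pSOpen_subset_pSBar p) (isClosed_pSBar p)
  exact ⟨isClosed_pSBar p, hcl, fun hP => hcl.antisymm (pSBar_subset_closure_pSOpen hP p)⟩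

open OP in
/-- For any ω-poset `P` and `p ∈ P`, the set `{S ∈ SP : S ⊆ p^∧}` is closed in the
spectrum; the closure of `p_S` is always contained in it, with equality when `P` is prime. -/
theorem stmt0 {P : Type*} [PartialOrder P] (hP : IsOmegaPoset P) (p : P) :
    IsClosed (pSBar p) ∧ closure (pSOpen p) ⊆ pSBar p ∧
      (IsPrimePoset P → closure (pSOpen p) = pSBar p) :=
  stmt0_general p
end

section
/- In an ω-poset P, two elements p, q are adjacent (p ⌅ q, meaning for every cap C there exists c ∈ C with p ∧ c and c ∧ q) if and only if the closed sets {S ∈ SP : S ⊆ p^∧} and {S ∈ SP : S ⊆ q^∧} have non-empty intersection. -/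
/-!
`p ⌅ q` says exactly that `p^∧ ∩ q^∧` is a selector, and a point of `p̄_S ∩ q̄_S` is a minimal
selector inside `p^∧ ∩ q^∧`. So it remains to shrink a selector to a minimal one, which is Zorn's
lemma once the intersection of a chain of selectors is a selector. That holds because every cap
contains a finite cap (the levels are finite), and a chain of sets each meeting a finite set has
an intersection meeting it.
-/

theorem Set.sInter_inter_nonempty_of_isChain {α : Type*} {c : Set (Set α)}
    (hc : IsChain (· ⊆ ·) c) (hne : c.Nonempty) {F : Set α} (hF : F.Finite)
    (hmeet : ∀ s ∈ c, (s ∩ F).Nonempty) : (⋂₀ c ∩ F).Nonempty := by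
  by_contra hempty
  -- otherwise the complements of the members of `c` form a directed cover of `F`
  have hcover : F ⊆ ⋃₀ (compl '' c) := by
    intro x hxF
    by_contra hx
    simp only [Set.sUnion_image, Set.mem_iUnion, Set.mem_compl_iff, not_exists, not_not] at hx
    exact hempty ⟨x, Set.mem_sInter.mpr hx, hxF⟩
  have hdir : DirectedOn (· ⊆ ·) (compl '' c) := by
    rintro _ ⟨s, hs, rfl⟩ _ ⟨t, ht, rfl⟩
    rcases hc.total hs ht with hst | hts
    · exact ⟨sᶜ, Set.mem_image_of_mem _ hs, subset_rfl, Set.compl_subset_compl.mpr hst⟩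
    · exact ⟨tᶜ, Set.mem_image_of_mem _ ht, Set.compl_subset_compl.mpr hts, subset_rfl⟩
  obtain ⟨_, ⟨s, hs, rfl⟩, hFs⟩ :=
    hdir.exists_mem_subset_of_finite_of_subset_sUnion (hne.image _) hF hcover
  obtain ⟨x, hxs, hxF⟩ := hmeet s hs
  exact hFs hxF hxs

namespace OP

variable {P : Type*} [PartialOrder P]

theorem wedge_comm {p q : P} : wedge p q ↔ wedge q p :=
  exists_congr fun _ => and_comm

theorem IsSelector.mono {S T : Set P} (hS : IsSelector S) (hST : S ⊆ T) : IsSelector T :=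
  fun C hC => (hS C hC).mono (Set.inter_subset_inter_left C hST)

theorem barwedge_iff_isSelector_wedgeSet_inter {p q : P} :
    barwedge p q ↔ IsSelector (wedgeSet p ∩ wedgeSet q) := by
  refine forall₂_congr fun C _ => ⟨?_, ?_⟩
  · rintro ⟨c, hcC, hpc, hcq⟩
    exact ⟨c, ⟨hpc, wedge_comm.mp hcq⟩, hcC⟩
  · rintro ⟨c, ⟨hpc, hqc⟩, hcC⟩
    exact ⟨c, hcC, hpc, wedge_comm.mp hqc⟩

theorem IsCap.exists_finite_subset_isCap (hfin : ∀ n, (level P n).Finite) {C : Set P}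
    (hC : IsCap C) : ∃ C₀ ⊆ C, C₀.Finite ∧ IsCap C₀ := by
  obtain ⟨n, hn⟩ := hC
  choose f hfC hle using fun a : level P n => hn a a.2
  have := (hfin n).to_subtype
  refine ⟨Set.range f, Set.range_subset_iff.mpr hfC, Set.finite_range f, n, fun a ha => ?_⟩
  exact ⟨f ⟨a, ha⟩, Set.mem_range_self _, hle ⟨a, ha⟩⟩

theorem IsSelector.sInter_of_isChain (hfin : ∀ n, (level P n).Finite) {c : Set (Set P)}
    (hc : IsChain (· ⊆ ·) c) (hne : c.Nonempty) (hsel : ∀ s ∈ c, IsSelector s) :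
    IsSelector (⋂₀ c) := by
  intro C hC
  obtain ⟨C₀, hC₀C, hC₀fin, hC₀cap⟩ := hC.exists_finite_subset_isCap hfin
  refine (Set.sInter_inter_nonempty_of_isChain hc hne hC₀fin fun s hs => ?_).mono
    (Set.inter_subset_inter_right _ hC₀C)
  exact hsel s hs C₀ hC₀cap

theorem IsSelector.exists_subset_mem_spec (hfin : ∀ n, (level P n).Finite) {T : Set P}
    (hT : IsSelector T) : ∃ S ⊆ T, S ∈ Spec P := by
  obtain ⟨S, hST, hmin⟩ := zorn_superset_nonempty {S | IsSelector S}
    (fun c hcsel hc hne => ⟨⋂₀ c, IsSelector.sInter_of_isChain hfin hc hne hcsel,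
      fun _ => Set.sInter_subset_of_mem⟩) T hT
  exact ⟨S, hST, hmin.prop, fun T' hT'S hT' => hmin.eq_of_subset hT' hT'S⟩

end OP

open OP in
/-- `p ⌅ q` iff `p̄_S ∩ q̄_S ≠ ∅`. -/
theorem stmt3 {P : Type*} [PartialOrder P] (hP : IsOmegaPoset P) (p q : P) :
    barwedge p q ↔ (pSBar p ∩ pSBar q).Nonempty := by
  rw [barwedge_iff_isSelector_wedgeSet_inter]
  constructor
  · intro hsel
    obtain ⟨S, hS, hSpec⟩ := hsel.exists_subset_mem_spec hP.1
    exact ⟨⟨S, hSpec⟩, fun _ hx => (hS hx).1, fun _ hx => (hS hx).2⟩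
  · rintro ⟨S, hSp, hSq⟩
    exact S.2.1.mono (Set.subset_inter hSp hSq)
end

section
/- Every ∧-preserving refiner between ω-posets is automatically ⌅-preserving: if ⊐ ⊆ Q × P is a refiner (for every cap C of Q there is a cap B of P with B ⊏ C) satisfying ⊐ ∘ ∧ ∘ ⊏ ⊆ ∧, then it also satisfies ⊐ ∘ ⌅ ∘ ⊏ ⊆ ⌅. -/
namespace OP

section Refiners

variable {P Q : Type*} [PartialOrder P] [PartialOrder Q]

/-- A refiner: every cap of `Q` is refined through the relation by some cap of `P`. -/
def IsRefinerRel (R : Q → P → Prop) : Prop :=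
  ∀ C : Set Q, IsCap C → ∃ B : Set P, IsCap B ∧ ∀ b ∈ B, ∃ c ∈ C, R c b

/-- `∧`-preserving: `⊐ ∘ ∧ ∘ ⊏ ⊆ ∧`. -/
def WedgePres (R : Q → P → Prop) : Prop :=
  ∀ q p p' q', R q p → wedge p p' → R q' p' → wedge q q'

/-- `⌅`-preserving: `⊐ ∘ ⌅ ∘ ⊏ ⊆ ⌅`. -/
def BarwedgePres (R : Q → P → Prop) : Prop :=
  ∀ q p p' q', R q p → barwedge p p' → R q' p' → barwedge q q'

/-- The star `⊐*` of a relation: `q ⊐* p` iff some cap `C` has `C ∩ p^∧ ⊏ q`. -/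
def relStar (R : Q → P → Prop) (q : Q) (p : P) : Prop :=
  ∃ C : Set P, IsCap C ∧ ∀ c ∈ C, wedge p c → R q c

/-- Composition `▷ ∘ ⊐` with the star-above relation on `Q`. -/
def starAboveComp (R : Q → P → Prop) : Q → P → Prop :=
  fun q p => ∃ q', starBelow q' q ∧ R q' p

/-- A strong refiner: a `∧`-preserving refiner with `⊐ = ▷ * ⊐`. -/
def IsStrongRefiner (R : Q → P → Prop) : Prop :=
  IsRefinerRel R ∧ WedgePres R ∧ ∀ q p, R q p ↔ relStar (starAboveComp R) q p

/-- `φ` is the continuous map associated to `R`, i.e. `φ(S) = S^{⊏ ⊲}`. -/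
def specMapOf (R : Q → P → Prop) (φ : SpecT P → SpecT Q) : Prop :=
  ∀ S : SpecT P, (φ S).1 = {r : Q | ∃ p ∈ S.1, ∃ q, R q p ∧ starBelow q r}

/-- The relation `⊒_φ`: `q ⊒_φ p` iff `q̄_S ⊇ φ[p̄_S]`. -/
def relBarPhi (φ : SpecT P → SpecT Q) (q : Q) (p : P) : Prop :=
  ∀ S : SpecT P, S ∈ pSBar p → φ S ∈ pSBar q

/-- The relation `⊐_φ`: `q ⊐_φ p` iff `q_S ⊇ φ[p̄_S]`. -/
def relPhi (φ : SpecT P → SpecT Q) (q : Q) (p : P) : Prop :=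
  ∀ S : SpecT P, S ∈ pSBar p → φ S ∈ pSOpen q

/-- An arrow: a finite relation with `← ∘ ⌅` co-surjective. -/
def IsArrow (A : Q → P → Prop) : Prop :=
  {x : Q × P | A x.1 x.2}.Finite ∧ ∀ p : P, ∃ q p', A q p' ∧ barwedge p' p

/-- `A ≤ B` for relations: `A ⊆ ≤ ∘ B ∘ ≥`. -/
def arrowLe (A B : Q → P → Prop) : Prop :=
  ∀ q p, A q p → ∃ q' p', q ≤ q' ∧ p ≤ p' ∧ B q' p'

/-- The relation `⟨←` of an arrow: `q ⟨← p` iff `p^{⌅→} ⊲ q`. -/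
def angleRel (A : Q → P → Prop) (q : Q) (p : P) : Prop :=
  ∀ q', (∃ p', barwedge p p' ∧ A q' p') → starBelow q' q

/-- The relation `⋂ₙ (←ₙ)̄_S` on spectra determined by a sequence of arrows. -/
def seqGraph (A : ℕ → Q → P → Prop) (T : SpecT Q) (S : SpecT P) : Prop :=
  ∀ n, ∃ q p, A n q p ∧ T.1 ⊆ wedgeSet q ∧ S.1 ⊆ wedgeSet p

end Refiners

end OP

open OP in
theorem stmt6_general {P Q : Type*} [PartialOrder P] [PartialOrder Q]
    (R : Q → P → Prop) (href : IsRefinerRel R) (hw : WedgePres R) : BarwedgePres R := by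
  intro q p p' q' hqp hpp' hq'p' C hC
  obtain ⟨B, hB, hBC⟩ := href C hC
  obtain ⟨b, hbB, hpb, hbp'⟩ := hpp' B hB
  obtain ⟨c, hcC, hcb⟩ := hBC b hbB
  exact ⟨c, hcC, hw q p b c hqp hpb hcb, hw c b p' q' hcb hbp' hq'p'⟩

open OP in
/-- Every `∧`-preserving refiner between ω-posets is `⌅`-preserving. -/
theorem stmt6 {P Q : Type*} [PartialOrder P] [PartialOrder Q]
    (hP : IsOmegaPoset P) (hQ : IsOmegaPoset Q) (R : Q → P → Prop)
    (href : IsRefinerRel R) (hw : WedgePres R) : BarwedgePres R :=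
  stmt6_general R href hw
end
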